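/- Let F have characteristic p = 0 or p > dδ, and suppose f = ∑_{i=1}^{r} β_i f_i^d with f_1^d, ..., f_r^d linearly independent, deg f_i ≤ δ. Let L̃ = ∑_{i=0}^{r} P_i(x) ∇^i be the operator obtained from the Laplace expansion of the Wronskian W(f, f_1^d, ..., f_r^d) along its first column after dividing out the common gcd of the cofactors. Then L̃ is a nonzero operator, L̃(f) = 0, L̃(f_i^d) = 0 for all i, and the kernel of L̃ among polynomials of degree ≤ dδ is exactly span{f_1^d, ..., f_r^d}. -/

import Mathlib

/-!
Expanding the Wronskian `W(g, f₁ᵈ, …, f_rᵈ)` along its first column gives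
`(∏ⱼ fⱼ^(d-r)) · gcd · L̃(g) = W(g, f₁ᵈ, …, f_rᵈ)`, so `L̃(g) = 0` exactly when this Wronskian
vanishes. For polynomials of degree `≤ D` in characteristic `0` or `> D`, a Wronskian vanishes
iff the family is linearly dependent: after a change of basis the polynomials have distinct
degrees `eⱼ`, and once row `i` is multiplied by `X^i`, the coefficient of `X^(∑ eⱼ)` in the
determinant is the product of the leading coefficients times `det ((eⱼ)_(i))` (falling
factorials), a Vandermonde determinant in the `eⱼ`, which are distinct in `F`.
-/

open Polynomial

/-- The `k`-th cofactor (along the first column) of the Wronskian matrix of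
`(f, f_1^d, …, f_r^d)`: the determinant of the minor deleting row `k` and the
first column. -/
noncomputable def wronskiCofactor {F : Type*} [Field F] (r d : ℕ)
    (fs : Fin r → F[X]) (k : Fin (r + 1)) : F[X] :=
  Matrix.det (Matrix.of fun i j : Fin r =>
    (fun p : F[X] => derivative p)^[((k.succAbove i : Fin (r + 1)) : ℕ)] (fs j ^ d))

/-- The signed cofactor with the common factor `∏_j f_j^{d-r}` divided out. -/
noncomputable def wronskiPtilde {F : Type*} [Field F] (r d : ℕ)
    (fs : Fin r → F[X]) (k : Fin (r + 1)) : F[X] :=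
  ((-1 : F[X]) ^ (k : ℕ) * wronskiCofactor r d fs k) / ∏ j, fs j ^ (d - r)

/-- The normalized coefficients `P_k` of the operator `L̃`, obtained by dividing the
`P̃_k` by their common gcd. -/
noncomputable def wronskiP {F : Type*} [Field F] [DecidableEq F] (r d : ℕ)
    (fs : Fin r → F[X]) (k : Fin (r + 1)) : F[X] :=
  wronskiPtilde r d fs k / Finset.univ.gcd (wronskiPtilde r d fs)

theorem EuclideanDomain.mul_div_cancel_of_dvd {R : Type*} [EuclideanDomain R] {a b : R}
    (h : b ∣ a) : b * (a / b) = a := by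
  rcases eq_or_ne b 0 with rfl | hb
  · rw [zero_mul, (zero_dvd_iff.mp h)]
  · exact EuclideanDomain.mul_div_cancel' hb h

namespace Polynomial

variable {R : Type*} [CommRing R]

theorem coeff_X_pow_mul_iterate_derivative (p : R[X]) (i m : ℕ) :
    (X ^ i * derivative^[i] p).coeff m = m.descFactorial i • p.coeff m := by
  rw [coeff_X_pow_mul']
  split_ifs with h
  · rw [coeff_iterate_derivative, Nat.sub_add_cancel h]
  · rw [Nat.descFactorial_eq_zero_iff_lt.mpr (not_le.mp h), zero_smul]

theorem natDegree_X_pow_mul_iterate_derivative_le (p : R[X]) (i : ℕ) :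
    (X ^ i * derivative^[i] p).natDegree ≤ p.natDegree := by
  refine natDegree_le_iff_coeff_eq_zero.mpr fun m hm => ?_
  rw [coeff_X_pow_mul_iterate_derivative, coeff_eq_zero_of_natDegree_lt hm, smul_zero]

theorem coeff_prod_sum_of_natDegree_le {ι : Type*} (s : Finset ι) (p : ι → R[X]) (b : ι → ℕ)
    (h : ∀ i ∈ s, (p i).natDegree ≤ b i) :
    (∏ i ∈ s, p i).coeff (∑ i ∈ s, b i) = ∏ i ∈ s, (p i).coeff (b i) := by
  induction s using Finset.cons_induction with
  | empty => simp
  | cons a s ha ih =>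
    have hs : ∀ i ∈ s, (p i).natDegree ≤ b i := fun i hi => h i (Finset.mem_cons_of_mem hi)
    rw [Finset.prod_cons, Finset.sum_cons, Finset.prod_cons,
      coeff_mul_add_eq_of_natDegree_le (h a (Finset.mem_cons_self a s))
        ((natDegree_prod_le _ _).trans (Finset.sum_le_sum hs)), ih hs]

end Polynomial

namespace Matrix

variable {R : Type*} [CommRing R] {n : ℕ}

theorem coeff_det_of_natDegree_le (M : Matrix (Fin n) (Fin n) R[X]) (b : Fin n → ℕ)
    (h : ∀ i j, (M i j).natDegree ≤ b j) :
    M.det.coeff (∑ j, b j) = (of fun i j => (M i j).coeff (b j)).det := by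
  rw [det_apply', det_apply', finsetSum_coeff]
  refine Finset.sum_congr rfl fun σ _ => ?_
  rw [← C_eq_intCast, coeff_C_mul, coeff_prod_sum_of_natDegree_le _ _ _ fun i _ => h (σ i) i]
  rfl

theorem prod_dvd_det_of_dvd_col {ι : Type*} [Fintype ι] [DecidableEq ι]
    (M : Matrix ι ι R) (c : ι → R) (h : ∀ i j, c j ∣ M i j) : ∏ j, c j ∣ M.det := by
  choose N hN using h
  have hM : M = of fun i j => c j * of N i j := ext hN
  exact ⟨_, hM ▸ det_mul_row c (of N)⟩

theorem det_descFactorial_ne_zero [IsDomain R] (e : Fin n → ℕ)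
    (he : Function.Injective fun j => (e j : R)) :
    (of fun i j : Fin n => ((e j).descFactorial i : R)).det ≠ 0 := by
  have hT : (of fun i j : Fin n => ((e j).descFactorial i : R)) =
      (of fun i j : Fin n => (descPochhammer R j).eval (e i : R))ᵀ := by
    ext i j
    simp [descPochhammer_eval_eq_descFactorial]
  rw [hT, det_transpose, ← det_eval_matrixOfPolynomials_eq_det_vandermonde _ _
    (fun i => descPochhammer_natDegree R i) (fun i => monic_descPochhammer R i)]
  exact det_vandermonde_ne_zero_iff.mpr he

end Matrix

theorem natCast_injOn_Iic_of_ringChar {F : Type*} [Field F] {D : ℕ}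
    (hchar : ringChar F = 0 ∨ D < ringChar F) : Set.InjOn (Nat.cast : ℕ → F) (Set.Iic D) := by
  rcases hchar with h0 | hD
  · have : CharP F 0 := h0 ▸ ringChar.charP F
    have : CharZero F := CharP.charP_to_charZero F
    exact Nat.cast_injective.injOn
  · exact (CharP.natCast_injOn_Iio F (ringChar F)).mono fun a ha => lt_of_le_of_lt ha hD

section Wronskian

open Matrix

variable {R : Type*} [CommRing R] {n : ℕ}

noncomputable def wronskianMatrix (v : Fin n → R[X]) : Matrix (Fin n) (Fin n) R[X] :=
  of fun i j => derivative^[i] (v j)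

theorem wronskianMatrix_sum_smul (v : Fin n → R[X]) (Γ : Matrix (Fin n) (Fin n) R) :
    wronskianMatrix (fun j => ∑ k, Γ k j • v k) = wronskianMatrix v * Γ.map C := by
  ext i j : 1
  simp only [wronskianMatrix, of_apply, mul_apply, map_apply, iterate_derivative_sum,
    smul_eq_C_mul, iterate_derivative_C_mul]
  exact Finset.sum_congr rfl fun _ _ => mul_comm _ _

theorem det_wronskianMatrix_eq_zero_of_not_linearIndependent [IsDomain R] {v : Fin n → R[X]}
    (hv : ¬LinearIndependent R v) : (wronskianMatrix v).det = 0 := by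
  obtain ⟨g, hg, j, hj⟩ := Fintype.not_linearIndependent_iff.mp hv
  refine exists_mulVec_eq_zero_iff.mp ⟨fun k => C (g k), fun h => hj ?_, ?_⟩
  · exact C_eq_zero.mp (congrFun h j)
  · ext1 i
    have := congrArg (derivative^[i]) hg
    simp only [iterate_derivative_sum, smul_eq_C_mul, iterate_derivative_C_mul,
      iterate_derivative_zero] at this
    simpa [wronskianMatrix, mulVec, dotProduct, mul_comm] using this

theorem det_wronskianMatrix_ne_zero_of_natDegree_injective [IsDomain R] {v : Fin n → R[X]}
    (hv : ∀ j, v j ≠ 0) (hinj : Function.Injective fun j => ((v j).natDegree : R)) :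
    (wronskianMatrix v).det ≠ 0 := by
  set e : Fin n → ℕ := fun j => (v j).natDegree
  set M : Matrix (Fin n) (Fin n) R[X] := of fun i j => X ^ (i : ℕ) * derivative^[i] (v j)
  have hM : M.det = (∏ i : Fin n, X ^ (i : ℕ)) * (wronskianMatrix v).det :=
    det_mul_column _ (wronskianMatrix v)
  have htop : M.det.coeff (∑ j, e j) =
      (∏ j, (v j).leadingCoeff) * (of fun i j : Fin n => ((e j).descFactorial i : R)).det := by
    rw [coeff_det_of_natDegree_le M e fun i j => natDegree_X_pow_mul_iterate_derivative_le _ _,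
      ← det_mul_row]
    congr 1
    ext i j
    simp only [M, of_apply, coeff_X_pow_mul_iterate_derivative, nsmul_eq_mul]
    exact mul_comm _ _
  intro h0
  rw [hM, h0, mul_zero, coeff_zero] at htop
  exact mul_ne_zero (Finset.prod_ne_zero_iff.mpr fun j _ => leadingCoeff_ne_zero.mpr (hv j))
    (det_descFactorial_ne_zero e hinj) htop.symm

end Wronskian

section Field

open Matrix

variable {F : Type*} [Field F] {n D : ℕ}

theorem natDegree_le_of_mem_span {v : Fin n → F[X]} (hv : ∀ j, (v j).natDegree ≤ D) {g : F[X]}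
    (hg : g ∈ Submodule.span F (Set.range v)) : g.natDegree ≤ D := by
  obtain ⟨c, rfl⟩ := (Submodule.mem_span_range_iff_exists_fun F).mp hg
  exact natDegree_sum_le_of_forall_le _ _ fun j _ => (natDegree_smul_le _ _).trans (hv j)

theorem exists_natDegree_injective_of_le_finrank {V : Submodule F F[X]}
    (hV : ∀ g ∈ V, g.natDegree ≤ D) (hn : n ≤ Module.finrank F V) :
    ∃ w : Fin n → F[X], (∀ j, w j ∈ V) ∧ (∀ j, w j ≠ 0) ∧
      Function.Injective fun j => (w j).natDegree := by
  classical
  -- Reading off the coefficients at the degrees `T` attained in `V` is injective on `V`.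
  set T : Finset ℕ := (Finset.range (D + 1)).filter fun e => ∃ g ∈ V, g ≠ 0 ∧ g.natDegree = e
  let Φ : V →ₗ[F] (T → F) := LinearMap.pi fun e => (lcoeff F e).comp V.subtype
  have hΦ : Function.Injective Φ := by
    refine (injective_iff_map_eq_zero Φ).mpr fun g hg => Subtype.ext ?_
    by_contra hg0
    have hmem : (g : F[X]).natDegree ∈ T :=
      Finset.mem_filter.mpr
        ⟨Finset.mem_range.mpr (Nat.lt_succ_of_le (hV g g.2)), g, g.2, hg0, rfl⟩
    exact leadingCoeff_ne_zero.mpr hg0 (congrFun hg ⟨_, hmem⟩)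
  have hcard : n ≤ T.card := by
    calc n ≤ Module.finrank F V := hn
      _ ≤ Module.finrank F (T → F) := LinearMap.finrank_le_finrank_of_injective hΦ
      _ = T.card := by simp
  obtain ⟨ι⟩ : Nonempty (Fin n ↪ T) :=
    Function.Embedding.nonempty_of_card_le (by simpa using hcard)
  have hT : ∀ j, ∃ g ∈ V, g ≠ 0 ∧ g.natDegree = ι j := fun j => (Finset.mem_filter.mp (ι j).2).2
  choose w hwV hw0 hwdeg using hT
  refine ⟨w, hwV, hw0, fun a b hab => ι.injective (Subtype.ext ?_)⟩
  simpa only [hwdeg] using hab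

theorem det_wronskianMatrix_ne_zero_iff (hchar : Set.InjOn (Nat.cast : ℕ → F) (Set.Iic D))
    {v : Fin n → F[X]} (hv : ∀ j, (v j).natDegree ≤ D) :
    (wronskianMatrix v).det ≠ 0 ↔ LinearIndependent F v := by
  refine ⟨not_imp_comm.mp det_wronskianMatrix_eq_zero_of_not_linearIndependent, fun hind => ?_⟩
  obtain ⟨w, hwV, hw0, hwdeg⟩ := exists_natDegree_injective_of_le_finrank
    (fun _ => natDegree_le_of_mem_span hv)
    ((finrank_span_eq_card hind).trans (Fintype.card_fin n)).ge
  choose Γ hΓ using fun j => (Submodule.mem_span_range_iff_exists_fun F).mp (hwV j)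
  have hw : w = fun j => ∑ k, (of Γ)ᵀ k j • v k := funext fun j => (hΓ j).symm
  have hW := det_wronskianMatrix_ne_zero_of_natDegree_injective hw0 fun a b hab =>
    hwdeg (hchar (natDegree_le_of_mem_span hv (hwV a)) (natDegree_le_of_mem_span hv (hwV b)) hab)
  rw [hw, wronskianMatrix_sum_smul, det_mul] at hW
  exact left_ne_zero_of_mul hW

theorem det_wronskianMatrix_cons_eq_zero_iff
    (hchar : Set.InjOn (Nat.cast : ℕ → F) (Set.Iic D)) {v : Fin n → F[X]}
    (hind : LinearIndependent F v) (hv : ∀ j, (v j).natDegree ≤ D) {g : F[X]}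
    (hg : g.natDegree ≤ D) :
    (wronskianMatrix (Fin.cons g v : Fin (n + 1) → F[X])).det = 0 ↔
      g ∈ Submodule.span F (Set.range v) := by
  rw [← not_iff_not, ← Ne, det_wronskianMatrix_ne_zero_iff hchar (Fin.cases hg hv),
    linearIndependent_finCons, and_iff_right hind]

end Field

noncomputable def wronskiOperator {F : Type*} [Field F] [DecidableEq F] (r d : ℕ)
    (fs : Fin r → F[X]) (g : F[X]) : F[X] :=
  ∑ k, wronskiP r d fs k * (fun p : F[X] => derivative p)^[(k : ℕ)] g

section WronskiOperator

variable {F : Type*} [Field F] {r d : ℕ} (fs : Fin r → F[X])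

theorem prod_pow_sub_dvd_wronskiCofactor (k : Fin (r + 1)) :
    ∏ j, fs j ^ (d - r) ∣ wronskiCofactor r d fs k :=
  Matrix.prod_dvd_det_of_dvd_col _ _ fun _ _ =>
    (pow_dvd_pow _ (Nat.sub_le_sub_left (Fin.is_le _) d)).trans
      (pow_sub_dvd_iterate_derivative_pow _ _ _)

theorem wronskiCofactor_last :
    wronskiCofactor r d fs (Fin.last r) = (wronskianMatrix fun j => fs j ^ d).det := by
  simp only [wronskiCofactor, wronskianMatrix, Fin.succAbove_last, Fin.val_castSucc]

theorem det_wronskianMatrix_cons (g : F[X]) :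
    (wronskianMatrix (Fin.cons g fun j => fs j ^ d : Fin (r + 1) → F[X])).det =
      ∑ k : Fin (r + 1), (-1) ^ (k : ℕ) * derivative^[k] g * wronskiCofactor r d fs k :=
  Matrix.det_succ_column_zero _

variable [DecidableEq F]

theorem prod_mul_gcd_mul_wronskiP (k : Fin (r + 1)) :
    (∏ j, fs j ^ (d - r)) * Finset.univ.gcd (wronskiPtilde r d fs) * wronskiP r d fs k =
      (-1) ^ (k : ℕ) * wronskiCofactor r d fs k := by
  rw [mul_assoc, wronskiP,
    EuclideanDomain.mul_div_cancel_of_dvd (Finset.gcd_dvd (Finset.mem_univ k)), wronskiPtilde,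
    EuclideanDomain.mul_div_cancel_of_dvd
      ((prod_pow_sub_dvd_wronskiCofactor fs k).mul_left _)]

theorem prod_mul_gcd_mul_wronskiOperator (g : F[X]) :
    (∏ j, fs j ^ (d - r)) * Finset.univ.gcd (wronskiPtilde r d fs) * wronskiOperator r d fs g =
      (wronskianMatrix (Fin.cons g fun j => fs j ^ d : Fin (r + 1) → F[X])).det := by
  rw [det_wronskianMatrix_cons, wronskiOperator, Finset.mul_sum]
  refine Finset.sum_congr rfl fun k _ => ?_
  rw [← mul_assoc, prod_mul_gcd_mul_wronskiP]
  ring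

variable {fs}

theorem prod_mul_gcd_mul_wronskiP_last_ne_zero
    (hW : (wronskianMatrix fun j => fs j ^ d).det ≠ 0) :
    (∏ j, fs j ^ (d - r)) * Finset.univ.gcd (wronskiPtilde r d fs) *
      wronskiP r d fs (Fin.last r) ≠ 0 := by
  rw [prod_mul_gcd_mul_wronskiP, wronskiCofactor_last]
  exact mul_ne_zero (pow_ne_zero _ (neg_ne_zero.mpr one_ne_zero)) hW

theorem wronskiOperator_eq_zero_iff (hW : (wronskianMatrix fun j => fs j ^ d).det ≠ 0)
    (g : F[X]) :
    wronskiOperator r d fs g = 0 ↔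
      (wronskianMatrix (Fin.cons g fun j => fs j ^ d : Fin (r + 1) → F[X])).det = 0 := by
  rw [← prod_mul_gcd_mul_wronskiOperator, mul_eq_zero,
    or_iff_right (left_ne_zero_of_mul (prod_mul_gcd_mul_wronskiP_last_ne_zero hW))]

end WronskiOperator

/-- The operator `L̃ = ∑ P_i ∇^i` obtained from the Laplace expansion of
`W(f, f_1^d, …, f_r^d)` along the first column, after dividing out the common gcd,
is nonzero, annihilates `f` and each `f_i^d`, and its kernel among polynomials of
degree at most `dδ` is exactly `span{f_1^d, …, f_r^d}`. -/
theorem stmt12 (F : Type*) [Field F] [DecidableEq F] (r d δ : ℕ)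
    (hp : ringChar F = 0 ∨ d * δ < ringChar F)
    (f : F[X]) (β : Fin r → F) (fs : Fin r → F[X])
    (hdeg : ∀ i, (fs i).natDegree ≤ δ)
    (hind : LinearIndependent F fun i => fs i ^ d)
    (hf : f = ∑ i, β i • fs i ^ d) :
    (∃ k, wronskiP r d fs k ≠ 0) ∧
    (∑ k, wronskiP r d fs k *
        (fun p : F[X] => derivative p)^[(k : ℕ)] f = 0) ∧
    (∀ i, ∑ k, wronskiP r d fs k *
        (fun p : F[X] => derivative p)^[(k : ℕ)] (fs i ^ d) = 0) ∧
    ({g : F[X] | g.natDegree ≤ d * δ ∧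
        ∑ k, wronskiP r d fs k *
          (fun p : F[X] => derivative p)^[(k : ℕ)] g = 0} =
      ↑(Submodule.span F (Set.range fun i => fs i ^ d))) := by
  have hchar := natCast_injOn_Iic_of_ringChar hp
  have hdeg' : ∀ i, (fs i ^ d).natDegree ≤ d * δ := fun i => natDegree_pow_le_of_le d (hdeg i)
  have hW := (det_wronskianMatrix_ne_zero_iff hchar hdeg').mpr hind
  have hspan_deg : ∀ g ∈ Submodule.span F (Set.range fun i => fs i ^ d), g.natDegree ≤ d * δ :=
    fun _ => natDegree_le_of_mem_span hdeg'
  have hker : ∀ g, g.natDegree ≤ d * δ →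
      (wronskiOperator r d fs g = 0 ↔ g ∈ Submodule.span F (Set.range fun i => fs i ^ d)) :=
    fun g hg => (wronskiOperator_eq_zero_iff hW g).trans
      (det_wronskianMatrix_cons_eq_zero_iff hchar hind hdeg' hg)
  have hf_mem : f ∈ Submodule.span F (Set.range fun i => fs i ^ d) :=
    hf ▸ Submodule.sum_mem _ fun i _ => Submodule.smul_mem _ _ (Submodule.subset_span ⟨i, rfl⟩)
  refine ⟨⟨Fin.last r, right_ne_zero_of_mul (prod_mul_gcd_mul_wronskiP_last_ne_zero hW)⟩,
    (hker f (hspan_deg f hf_mem)).mpr hf_mem,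
    fun i => (hker _ (hdeg' i)).mpr (Submodule.subset_span ⟨i, rfl⟩), ?_⟩
  ext g
  exact ⟨fun hg => (hker g hg.1).mp hg.2,
    fun hg => ⟨hspan_deg g hg, (hker g (hspan_deg g hg)).mpr hg⟩⟩
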